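/- arXiv:2305.09982 — 4 statements merged into one kernel-verified Lean document; each statement's English description precedes it below -/
import Mathlib

section
/- Let a(t) = 1 + t²/(2(1−t²)) for t ∈ [0,1). If g : [0,∞) → [0,1) satisfies g(0)=0 and g'(t)=1/√(a(g(t))), then g is strictly increasing and g(t) → 1 as t → ∞. -/
open Set Real Filter

theorem stmt_2 (a g : ℝ → ℝ)
    (ha : ∀ t ∈ Set.Ico (0:ℝ) 1, a t = 1 + t^2 / (2 * (1 - t^2)))
    (hgmap : ∀ t ∈ Set.Ici (0:ℝ), g t ∈ Set.Ico (0:ℝ) 1)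
    (hg0 : g 0 = 0)
    (hg : ∀ t ∈ Set.Ici (0:ℝ), HasDerivAt g (1 / Real.sqrt (a (g t))) t) :
    StrictMonoOn g (Set.Ici 0) ∧ Filter.Tendsto g Filter.atTop (nhds 1) := by
  have hcont : ContinuousOn g (Set.Ici 0) := fun t ht =>
    (hg t ht).continuousAt.continuousWithinAt
  have hapos : ∀ x ∈ Set.Ico (0:ℝ) 1, (1:ℝ) ≤ a x := by
    intro x hx
    rw [ha x hx]
    have h1 : x^2 < 1 := by nlinarith [hx.1, hx.2]
    have h2 : 0 ≤ x^2 / (2*(1-x^2)) :=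
      div_nonneg (sq_nonneg x) (by linarith)
    linarith
  have hderiv : ∀ t ∈ Set.Ioi (0:ℝ), deriv g t = 1 / Real.sqrt (a (g t)) :=
    fun t ht => (hg t (Set.mem_Ici.2 (le_of_lt ht))).deriv
  have hderivpos : ∀ t ∈ Set.Ioi (0:ℝ), 0 < deriv g t := by
    intro t ht
    rw [hderiv t ht]
    have h1 := hapos (g t) (hgmap t (Set.mem_Ici.2 (le_of_lt ht)))
    exact div_pos one_pos (Real.sqrt_pos.2 (by linarith))
  have hmono : StrictMonoOn g (Set.Ici 0) := by
    apply strictMonoOn_of_deriv_pos (convex_Ici 0) hcont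
    intro t ht
    rw [interior_Ici] at ht
    exact hderivpos t ht
  refine ⟨hmono, ?_⟩
  rw [tendsto_order]
  constructor
  · intro b hb
    rcases lt_or_ge b 0 with hb0 | hb0
    · filter_upwards [eventually_ge_atTop (0:ℝ)] with t ht
      exact hb0.trans_le (hgmap t ht).1
    · have key : ∃ T, 0 ≤ T ∧ b < g T := by
        by_contra h
        push_neg at h
        have hb2 : b^2 < 1 := by nlinarith
        set M : ℝ := 1 + 1/(2*(1-b^2)) with hM
        have hMpos : (1:ℝ) ≤ M := by
          have h5 : 0 < 1/(2*(1-b^2)) := div_pos one_pos (by linarith)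
          rw [hM]; linarith
        have hdiff : DifferentiableOn ℝ g (interior (Set.Ici (0:ℝ))) := by
          intro t ht; rw [interior_Ici] at ht
          exact (hg t (Set.mem_Ici.2 (le_of_lt ht))).differentiableAt.differentiableWithinAt
        have hc : ∀ t ∈ interior (Set.Ici (0:ℝ)), 1/Real.sqrt M ≤ deriv g t := by
          intro t ht
          rw [interior_Ici] at ht
          rw [hderiv t ht]
          have hx := hgmap t (Set.mem_Ici.2 (le_of_lt ht))
          have hxb : g t ≤ b := h t (le_of_lt ht)
          have ha1 := hapos (g t) hx
          have haM : a (g t) ≤ M := by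
            rw [ha (g t) hx]
            have h2 : (g t)^2 ≤ 1 := by nlinarith [hx.1, hx.2]
            have h1 : (g t)^2 ≤ b^2 := by nlinarith [hx.1]
            have h3 : 0 < 1 - b^2 := by linarith
            have h4 := div_le_div₀ (by norm_num : (0:ℝ) ≤ 1) h2
              (by linarith : (0:ℝ) < 2*(1-b^2))
              (by linarith : 2*(1-b^2) ≤ 2*(1-(g t)^2))
            rw [hM]; linarith
          have hs : 0 < Real.sqrt (a (g t)) := Real.sqrt_pos.2 (by linarith)
          exact one_div_le_one_div_of_le hs (Real.sqrt_le_sqrt haM)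
        have hcpos : 0 < 1/Real.sqrt M := div_pos one_pos (Real.sqrt_pos.2 (by linarith))
        set c := 1/Real.sqrt M with hcdef
        set T := (b+1)/c with hTdef
        have hT : 0 ≤ T := le_of_lt (div_pos (by linarith) hcpos)
        have hkey := (convex_Ici (0:ℝ)).mul_sub_le_image_sub_of_le_deriv hcont hdiff hc
          0 self_mem_Ici T hT hT
        rw [hg0] at hkey
        have hgT : g T ≤ b := h T hT
        have hcT : c * T = b + 1 := by
          rw [hTdef]; field_simp
        nlinarith
      obtain ⟨T, hT0, hT⟩ := key
      filter_upwards [eventually_ge_atTop T] with t ht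
      rcases eq_or_lt_of_le ht with rfl | h'
      · exact hT
      · exact hT.trans (hmono hT0 (hT0.trans ht) h')
  · intro b hb
    filter_upwards [eventually_ge_atTop (0:ℝ)] with t ht
    exact lt_trans (hgmap t ht).2 hb
end

section
/- Let f(t) = 1 + t^p with p ∈ (0,1] and F(t) = t + t^{p+1}/(p+1). Then √F is concave on (0,∞) but F/f is not convex on (0,∞). -/
open Set Real

set_option maxHeartbeats 1600000 in
theorem stmt_8 (p : ℝ) (hp : p ∈ Set.Ioc (0:ℝ) 1) (F : ℝ → ℝ)
    (hF : ∀ t, F t = t + t ^ (p+1) / (p+1)) :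
    ConcaveOn ℝ (Set.Ioi 0) (fun t : ℝ => Real.sqrt (F t)) ∧
      ¬ ConvexOn ℝ (Set.Ioi 0) (fun t : ℝ => F t / (1 + t ^ p)) := by
  obtain ⟨hp0, hp1⟩ := hp
  have hFe : F = fun t : ℝ => t + t ^ (p+1) / (p+1) := funext hF
  subst hFe
  have hp1' : (0:ℝ) < p + 1 := by linarith
  -- basic facts about F at positive points
  have hFpos : ∀ x : ℝ, 0 < x → 0 < x + x ^ (p+1) / (p+1) := by
    intro x hx
    have : 0 ≤ x ^ (p+1) / (p+1) := div_nonneg (Real.rpow_nonneg hx.le _) hp1'.le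
    linarith
  -- derivative of F
  have hFd : ∀ x : ℝ, 0 < x →
      HasDerivAt (fun t : ℝ => t + t ^ (p+1) / (p+1)) (1 + x ^ p) x := by
    intro x hx
    have h1 : HasDerivAt (fun t : ℝ => t ^ (p+1)) ((p+1) * x ^ (p+1-1)) x :=
      Real.hasDerivAt_rpow_const (Or.inl hx.ne')
    have he : p + 1 - 1 = p := by ring
    rw [he] at h1
    have h2 := (hasDerivAt_id x).add (h1.div_const (p+1))
    have h3 : (1:ℝ) + (p+1) * x ^ p / (p+1) = 1 + x ^ p := by
      field_simp
    rw [h3] at h2; exact h2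
  set G : ℝ → ℝ := fun t : ℝ => Real.sqrt (t + t ^ (p+1) / (p+1)) with hG
  set φ : ℝ → ℝ := fun x : ℝ =>
    (1 + x ^ p) / (2 * Real.sqrt (x + x ^ (p+1) / (p+1))) with hφdef
  have hGd : ∀ x ∈ Set.Ioi (0:ℝ), HasDerivAt G (φ x) x := by
    intro x hx
    have hx0 : (0:ℝ) < x := hx
    have hsq : HasDerivAt G
        (1 / (2 * Real.sqrt (x + x ^ (p+1) / (p+1))) * (1 + x ^ p)) x :=
      (Real.hasDerivAt_sqrt (hFpos x hx0).ne').comp x (hFd x hx0)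
    convert hsq using 1
    rw [hφdef]; ring
  have hsqpos : ∀ x : ℝ, 0 < x → 0 < Real.sqrt (x + x ^ (p+1) / (p+1)) :=
    fun x hx => Real.sqrt_pos.2 (hFpos x hx)
  -- second derivative formula
  have hφd : ∀ x ∈ Set.Ioi (0:ℝ), HasDerivAt φ
      ((p * x ^ (p-1) * (2 * Real.sqrt (x + x ^ (p+1) / (p+1)))
        - (1 + x ^ p) * (2 * φ x)) / (2 * Real.sqrt (x + x ^ (p+1) / (p+1)))^2) x := by
    intro x hx
    have hx0 : (0:ℝ) < x := hx
    have hu : HasDerivAt (fun t : ℝ => 1 + t ^ p) (p * x ^ (p-1)) x := by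
      have h := (hasDerivAt_const x (1:ℝ)).add
        (Real.hasDerivAt_rpow_const (p := p) (Or.inl hx0.ne'))
      rw [zero_add] at h; exact h
    have hv : HasDerivAt (fun t : ℝ => 2 * Real.sqrt (t + t ^ (p+1) / (p+1)))
        (2 * φ x) x := (hGd x hx).const_mul 2
    have hvne : 2 * Real.sqrt (x + x ^ (p+1) / (p+1)) ≠ 0 := by
      have := hsqpos x hx0; positivity
    exact hu.div hv hvne
  have hev : ∀ x ∈ Set.Ioi (0:ℝ), deriv G =ᶠ[nhds x] φ := by
    intro x hx
    filter_upwards [isOpen_Ioi.mem_nhds hx] with y hy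
    exact (hGd y hy).deriv
  -- nonpositivity of second derivative
  have hψ : ∀ x ∈ Set.Ioi (0:ℝ),
      (p * x ^ (p-1) * (2 * Real.sqrt (x + x ^ (p+1) / (p+1)))
        - (1 + x ^ p) * (2 * φ x)) / (2 * Real.sqrt (x + x ^ (p+1) / (p+1)))^2 ≤ 0 := by
    intro x hx
    have hx0 : (0:ℝ) < x := hx
    set s : ℝ := Real.sqrt (x + x ^ (p+1) / (p+1)) with hs
    have hs0 : 0 < s := hsqpos x hx0
    have hss : s * s = x + x ^ (p+1) / (p+1) := Real.mul_self_sqrt (hFpos x hx0).le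
    set X : ℝ := x ^ p with hX
    have hX0 : 0 < X := Real.rpow_pos_of_pos hx0 _
    have hx1 : x ^ (p-1) * x = X := by
      have h := Real.rpow_add hx0 (p-1) 1
      rw [Real.rpow_one, show p - 1 + 1 = p from by ring] at h
      rw [hX]; exact h.symm
    have hx2 : x ^ (p+1) = X * x := by
      have h := Real.rpow_add hx0 p 1
      rw [Real.rpow_one] at h
      rw [hX]; exact h
    apply div_nonpos_of_nonpos_of_nonneg _ (by positivity)
    -- numerator is nonpositive
    have hφx : φ x = (1 + X) / (2 * s) := rfl
    rw [hφx]
    have h2 : (1 + X) * (2 * ((1 + X) / (2 * s))) = (1 + X)^2 / s := by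
      field_simp
    rw [h2]
    have hexp : x ^ (p-1) * (x + X * x/(p+1)) = X + X*X/(p+1) := by
      calc x ^ (p-1) * (x + X * x/(p+1)) = (x^(p-1)*x) * (1 + X/(p+1)) := by ring
        _ = X * (1 + X/(p+1)) := by rw [hx1]
        _ = X + X*X/(p+1) := by ring
    have key : p * x ^ (p-1) * (2 * s) * s ≤ (1 + X)^2 := by
      have hrw : p * x ^ (p-1) * (2 * s) * s = 2 * p * (x ^ (p-1) * (s * s)) := by ring
      rw [hrw, hss, hx2, hexp]
      have hd1 : 2*p*(X*X/(p+1)) ≤ X*X := by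
        have he : 2*p*(X*X/(p+1)) = (2*p/(p+1))*(X*X) := by ring
        have h1 : 2*p/(p+1) ≤ 1 := by rw [div_le_one hp1']; linarith
        rw [he]
        nlinarith [mul_nonneg hX0.le hX0.le]
      nlinarith [hX0.le, mul_nonneg hX0.le hX0.le]
    have hfin : p * x ^ (p-1) * (2 * s) ≤ (1 + X)^2 / s := by
      rw [le_div_iff₀ hs0]; exact key
    linarith
  constructor
  · -- concavity of sqrt ∘ F
    refine concaveOn_of_deriv2_nonpos (convex_Ioi 0) ?_ ?_ ?_ ?_
    · exact fun x hx => ((hGd x hx).continuousAt).continuousWithinAt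
    · rw [interior_Ioi]
      exact fun x hx => (hGd x hx).differentiableAt.differentiableWithinAt
    · rw [interior_Ioi]
      intro x hx
      exact ((hφd x hx).congr_of_eventuallyEq (hev x hx)).differentiableAt.differentiableWithinAt
    · rw [interior_Ioi]
      intro x hx
      have h1 : deriv^[2] G x = deriv (deriv G) x := rfl
      rw [h1, (hev x hx).deriv_eq, (hφd x hx).deriv]
      exact hψ x hx
  · -- non-convexity of F / f
    intro hconv
    clear hψ hev hφd hGd hsqpos hφdef hG
    clear φ G
    clear hFd hFpos hF
    set b : ℝ := (p/8) ^ (p⁻¹) with hbdef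
    set c : ℝ := (8/p) ^ (p⁻¹) with hcdef
    have hb0 : 0 < b := Real.rpow_pos_of_pos (by positivity) _
    have hc0 : 0 < c := Real.rpow_pos_of_pos (by positivity) _
    have hbp : b ^ p = p/8 := by
      rw [hbdef, ← Real.rpow_mul (by positivity), inv_mul_cancel₀ hp0.ne', Real.rpow_one]
    have hcp : c ^ p = 8/p := by
      rw [hcdef, ← Real.rpow_mul (by positivity), inv_mul_cancel₀ hp0.ne', Real.rpow_one]
    have hpinv : (1:ℝ) ≤ p⁻¹ := by
      rw [inv_eq_one_div, le_div_iff₀ hp0]; linarith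
    have hble : b ≤ p/8 := by
      have h1 : (p/8 : ℝ) ^ (p⁻¹) ≤ (p/8) ^ (1:ℝ) :=
        Real.rpow_le_rpow_of_exponent_ge (by positivity) (by linarith) hpinv
      rwa [Real.rpow_one] at h1
    have hcge : (8:ℝ)/p ≤ c := by
      have h1 : (8/p : ℝ) ^ (1:ℝ) ≤ (8/p) ^ (p⁻¹) :=
        Real.rpow_le_rpow_of_exponent_le (by rw [le_div_iff₀ hp0]; linarith) hpinv
      rwa [Real.rpow_one] at h1
    have hc8 : (8:ℝ) ≤ c := by
      have : (8:ℝ) ≤ 8/p := by rw [le_div_iff₀ hp0]; nlinarith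
      linarith
    have hb18 : b ≤ 1/8 := by linarith
    have h2bc : 2 * b ≤ c := by linarith
    set a : ℝ := b/2 with hadef
    have ha0 : 0 < a := by positivity
    have hab : a < b := by rw [hadef]; linarith
    have hbc : b < c := by linarith
    -- rpow values at a, b, c
    set α : ℝ := a ^ p with hαdef
    have hα0 : 0 ≤ α := Real.rpow_nonneg ha0.le _
    have hap1 : a ^ (p+1) = α * a := by
      rw [hαdef, show a ^ (p+1) = a ^ p * a ^ (1:ℝ) from by rw [← Real.rpow_add ha0],
        Real.rpow_one]
    have hbp1 : b ^ (p+1) = (p/8) * b := by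
      rw [show b ^ (p+1) = b ^ p * b ^ (1:ℝ) from by rw [← Real.rpow_add hb0],
        Real.rpow_one, hbp]
    have hcp1 : c ^ (p+1) = (8/p) * c := by
      rw [show c ^ (p+1) = c ^ p * c ^ (1:ℝ) from by rw [← Real.rpow_add hc0],
        Real.rpow_one, hcp]
    clear_value b c a α
    -- slope inequality from convexity
    have hs := hconv.slope_mono_adjacent (Set.mem_Ioi.2 ha0) (Set.mem_Ioi.2 (ha0.trans (hab.trans hbc))) hab hbc
    -- values of g
    set g : ℝ → ℝ := fun t : ℝ => (t + t ^ (p+1) / (p+1)) / (1 + t ^ p) with hgdef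
    have hga : g a ≤ a := by
      rw [hgdef]
      simp only [hap1, hαdef]
      rw [div_le_iff₀ (by positivity)]
      have h1 : a ^ p * a / (p+1) ≤ a ^ p * a :=
        div_le_self (by positivity) (by linarith)
      nlinarith [Real.rpow_nonneg ha0.le p]
    have hgb_lo : b * (1 - p/8) ≤ g b := by
      rw [hgdef]
      simp only [hbp1, hbp]
      rw [le_div_iff₀ (by positivity)]
      have h1 : 0 ≤ p/8 * b / (p+1) := by positivity
      nlinarith [mul_nonneg hb0.le (sq_nonneg p)]
    have hgb_lo2 : b / (p+1) ≤ g b := by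
      rw [hgdef]
      simp only [hbp1, hbp]
      rw [div_le_div_iff₀ hp1' (by positivity)]
      have h1 : 0 ≤ p/8 * b / (p+1) * (p+1) := by positivity
      have h2 : p/8 * b / (p+1) * (p+1) = p/8 * b := by field_simp
      nlinarith
    have hgc_hi : g c ≤ c * (1 + p/8) / (p+1) := by
      rw [hgdef]
      simp only [hcp1, hcp]
      rw [div_le_div_iff₀ (by positivity) hp1']
      have h8 : (8:ℝ)/p * c / (p+1) * (p+1) = 8/p * c := by field_simp
      have h9 : (8:ℝ)/p * c * p = 8 * c := by field_simp
      nlinarith [mul_pos hc0 hp0]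
    -- derive the contradiction
    have hba : b - a = b/2 := by rw [hadef]; ring
    have hba0 : 0 < b - a := by linarith
    have hcb0 : 0 < c - b := by linarith
    have s1 : 1 - p/4 ≤ (g b - g a) / (b - a) := by
      rw [le_div_iff₀ hba0, hba]
      nlinarith
    have s2 : (g c - g b) / (c - b) ≤ (1 + p/4) / (p+1) := by
      rw [div_le_div_iff₀ hcb0 hp1']
      have hpb : p * (2*b) ≤ p * c := by
        exact mul_le_mul_of_nonneg_left h2bc hp0.le
      have h1 : (g c - g b) * (p+1) ≤ c * (1 + p/8) - b := by
        have := mul_le_mul_of_nonneg_right hgc_hi hp1'.le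
        have h2 : c * (1 + p/8) / (p+1) * (p+1) = c * (1 + p/8) := by
          field_simp
        have := mul_le_mul_of_nonneg_right hgb_lo2 hp1'.le
        have h3 : b / (p+1) * (p+1) = b := by field_simp
        nlinarith [mul_le_mul_of_nonneg_right hgc_hi hp1'.le,
          mul_le_mul_of_nonneg_right hgb_lo2 hp1'.le]
      nlinarith
    have hfinal : (1 - p/4 : ℝ) ≤ (1 + p/4) / (p+1) := le_trans s1 (le_trans hs s2)
    rw [le_div_iff₀ hp1'] at hfinal
    nlinarith
end

section
/- Let g : ℝ → ℝ be C¹, non-decreasing, with g ≡ 0 on (−∞,1], g ≡ 1 on [2,∞), and ‖g'‖_∞ ≤ 4. Let μ > 1/4 and set F(t) = t + μ·g(t). Then √F is not concave on (0,∞). Specifically, the tangent line to √F at t = 1 is y(t) = (t+1)/2, and √(F(2)) = √(2+μ) > 3/2 = y(2). -/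
/-!
On `(0, 1]` we have `F t = t`, so `√F` coincides with `√t` there and has left derivative `1/2`
at `t = 1`. A concave function lies below its left tangent line to the right of the point, so
concavity would force `√F t ≤ (t + 1) / 2` for `t > 1`; at `t = 2` this says `√(2 + μ) ≤ 3/2`,
which fails as soon as `μ > 1/4`.
-/

open Set Real

theorem ConcaveOn.slope_le_of_hasDerivWithinAt_Iio_left {S : Set ℝ} {f : ℝ → ℝ} {w x y f' : ℝ}
    (hfc : ConcaveOn ℝ S f) (hw : w ∈ S) (hy : y ∈ S) (hwx : w < x) (hxy : x < y)
    (hf' : HasDerivWithinAt f f' (Iio x) x) :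
    slope f x y ≤ f' := by
  have hx : x ∈ S := hfc.1.ordConnected.out hw hy ⟨hwx.le, hxy.le⟩
  apply ge_of_tendsto <| (hasDerivWithinAt_iff_tendsto_slope' self_notMem_Iio).mp hf'
  filter_upwards [Ioo_mem_nhdsLT hwx] with t ⟨hwt, htx⟩
  have ht : t ∈ S := hfc.1.ordConnected.out hw hx ⟨hwt.le, htx.le⟩
  exact hfc.slope_anti hx ⟨ht, htx.ne⟩ ⟨hy, hxy.ne'⟩ (htx.trans hxy).le

theorem ConcaveOn.le_add_one_div_two_of_eqOn_sqrt {f : ℝ → ℝ} (hfc : ConcaveOn ℝ (Ioi 0) f)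
    (hf : EqOn f sqrt (Ioc 0 1)) {y : ℝ} (hy : 1 < y) :
    f y ≤ (y + 1) / 2 := by
  have hderiv : HasDerivWithinAt f (1 / 2) (Iio 1) 1 := by
    have hsqrt : HasDerivAt sqrt (1 / 2) 1 := by
      simpa using Real.hasDerivAt_sqrt one_ne_zero
    refine hsqrt.hasDerivWithinAt.congr_of_eventuallyEq ?_ (hf ⟨one_pos, le_rfl⟩)
    filter_upwards [Ioo_mem_nhdsLT one_pos] with t ht using hf ⟨ht.1, ht.2.le⟩
  have hslope := hfc.slope_le_of_hasDerivWithinAt_Iio_left (w := 1 / 2) (by norm_num)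
    (zero_lt_one.trans hy) (by norm_num) hy hderiv
  rw [slope_def_field, hf ⟨one_pos, le_rfl⟩, sqrt_one,
    div_le_iff₀ (sub_pos.mpr hy)] at hslope
  linarith

theorem stmt_12_general (g : ℝ → ℝ)
    (hg1 : ∀ t ≤ (1:ℝ), g t = 0) (hg2 : ∀ t ≥ (2:ℝ), g t = 1)
    (μ : ℝ) (hμ : 1/4 < μ) (F : ℝ → ℝ) (hF : ∀ t, F t = t + μ * g t) :
    Real.sqrt (F 2) = Real.sqrt (2 + μ) ∧ (3:ℝ)/2 < Real.sqrt (2 + μ) ∧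
      ¬ ConcaveOn ℝ (Set.Ioi 0) (fun t => Real.sqrt (F t)) := by
  have hF2 : F 2 = 2 + μ := by rw [hF, hg2 2 le_rfl, mul_one]
  have hgt : (3:ℝ)/2 < Real.sqrt (2 + μ) :=
    lt_sqrt_of_sq_lt (by linarith)
  refine ⟨by rw [hF2], hgt, fun hconc => ?_⟩
  have hsqrt : EqOn (fun t => Real.sqrt (F t)) sqrt (Ioc 0 1) := fun t ht => by
    simp only [hF, hg1 t ht.2, mul_zero, add_zero]
  have hle := hconc.le_add_one_div_two_of_eqOn_sqrt hsqrt one_lt_two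
  simp only [hF2] at hle
  linarith

theorem stmt_12 (g : ℝ → ℝ) (hg : ContDiff ℝ 1 g) (hmono : Monotone g)
    (hg1 : ∀ t ≤ (1:ℝ), g t = 0) (hg2 : ∀ t ≥ (2:ℝ), g t = 1)
    (hg' : ∀ t, |deriv g t| ≤ 4)
    (μ : ℝ) (hμ : 1/4 < μ) (F : ℝ → ℝ) (hF : ∀ t, F t = t + μ * g t) :
    Real.sqrt (F 2) = Real.sqrt (2 + μ) ∧ (3:ℝ)/2 < Real.sqrt (2 + μ) ∧
      ¬ ConcaveOn ℝ (Set.Ioi 0) (fun t => Real.sqrt (F t)) :=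
  stmt_12_general g hg1 hg2 μ hμ F hF
end

section
/- Let N = 2 and Ω = (0,π) × (0,π), and let u(x,y) = sin(x)sin(y) be the first Dirichlet eigenfunction. Then the Hessian of u is negative semidefinite at (x,y) ∈ Ω if and only if |x − π/2| + |y − π/2| ≤ π/2. In particular, u is not concave on Ω. -/
/-! Since `sin x sin y = cos (x - π/2) cos (y - π/2)` and
`|cos x cos y| = sin |x - π/2| sin |y - π/2|` on the square, the addition formula gives
`sin x sin y - |cos x cos y| = cos (|x - π/2| + |y - π/2|)`. The Hessian `[[-s, c], [c, -s]]` is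
negative semidefinite iff `|c| ≤ s`, i.e. iff this cosine is nonnegative, i.e. iff the angle
`|x - π/2| + |y - π/2| ∈ [0, π)` is at most `π/2`. On the diagonal `u (t, t) = (1 - cos 2t) / 2`
is strictly convex for `t < π/4`, so `u` is not concave. -/

open Set Real

lemma quadratic_form_nonpos_iff (a b : ℝ) :
    (∀ v₁ v₂ : ℝ, a * v₁ ^ 2 + 2 * b * v₁ * v₂ + a * v₂ ^ 2 ≤ 0) ↔ |b| ≤ -a := by
  constructor
  · intro h
    have hdiag := h 1 1
    have hanti := h 1 (-1)
    rw [abs_le]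
    constructor <;> linarith
  · intro hb v₁ v₂
    have hb_le := le_abs_self b
    have hb_ge := neg_abs_le b
    nlinarith [mul_nonneg (sub_nonneg.2 hb) (add_nonneg (sq_nonneg v₁) (sq_nonneg v₂)),
      mul_nonneg (sub_nonneg.2 hb_le) (sq_nonneg (v₁ - v₂)),
      mul_nonneg (sub_nonneg.2 hb_ge) (sq_nonneg (v₁ + v₂))]

lemma sin_abs_sub_pi_div_two {x : ℝ} (hx : x ∈ Icc 0 π) : sin |x - π / 2| = |cos x| := by
  have hx' : |x - π / 2| ≤ π := by
    rw [abs_le]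
    constructor <;> linarith [hx.1, hx.2, pi_pos]
  rw [← abs_sin_eq_sin_abs_of_abs_le_pi hx', sin_sub_pi_div_two, abs_neg]

lemma cos_abs_sub_pi_div_two_add_abs_sub_pi_div_two {x y : ℝ} (hx : x ∈ Icc 0 π)
    (hy : y ∈ Icc 0 π) :
    cos (|x - π / 2| + |y - π / 2|) = sin x * sin y - |cos x * cos y| := by
  rw [cos_add, cos_abs, cos_abs, cos_sub_pi_div_two, cos_sub_pi_div_two,
    sin_abs_sub_pi_div_two hx, sin_abs_sub_pi_div_two hy, abs_mul]

lemma cos_nonneg_iff_le_pi_div_two {θ : ℝ} (hθ : θ ∈ Icc 0 π) : 0 ≤ cos θ ↔ θ ≤ π / 2 := by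
  rw [← cos_pi_div_two]
  exact strictAntiOn_cos.le_iff_ge ⟨by positivity, by linarith [pi_pos]⟩ hθ

lemma not_concaveOn_sin_mul_sin :
    ¬ ConcaveOn ℝ (Ioo 0 π ×ˢ Ioo 0 π) fun p : ℝ × ℝ => sin p.1 * sin p.2 := by
  intro h
  have hmem : ∀ t ∈ Ioo 0 π, (t, t) ∈ Ioo 0 π ×ˢ Ioo 0 π := fun t ht => ⟨ht, ht⟩
  have hπ := pi_pos
  have hmid := h.2 (hmem (π / 12) ⟨by positivity, by linarith⟩)
    (hmem (π / 4) ⟨by positivity, by linarith⟩) (by norm_num : (0 : ℝ) ≤ 1 / 2)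
    (by norm_num : (0 : ℝ) ≤ 1 / 2) (by norm_num)
  have hpt : (1 / 2 : ℝ) • (π / 12, π / 12) + (1 / 2 : ℝ) • (π / 4, π / 4) = (π / 6, π / 6) := by
    ext <;> simp only [Prod.fst_add, Prod.snd_add, Prod.smul_fst, Prod.smul_snd, smul_eq_mul] <;>
      ring
  simp only [hpt, smul_eq_mul, ← sq, sin_sq_eq_half_sub] at hmid
  rw [show 2 * (π / 12) = π / 6 by ring, show 2 * (π / 4) = π / 2 by ring,
    show 2 * (π / 6) = π / 3 by ring, cos_pi_div_six, cos_pi_div_two, cos_pi_div_three] at hmid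
  nlinarith [sq_sqrt (show (0 : ℝ) ≤ 3 by norm_num), sqrt_nonneg 3]

theorem stmt_19 (u : ℝ × ℝ → ℝ) (hu : ∀ p : ℝ × ℝ, u p = Real.sin p.1 * Real.sin p.2) :
    (∀ x ∈ Set.Ioo (0:ℝ) π, ∀ y ∈ Set.Ioo (0:ℝ) π,
      ((∀ v₁ v₂ : ℝ,
          (-(Real.sin x * Real.sin y)) * v₁^2 +
            2 * (Real.cos x * Real.cos y) * v₁ * v₂ +
            (-(Real.sin x * Real.sin y)) * v₂^2 ≤ 0) ↔
        |x - π/2| + |y - π/2| ≤ π/2)) ∧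
      ¬ ConcaveOn ℝ (Set.Ioo 0 π ×ˢ Set.Ioo 0 π) u := by
  refine ⟨fun x hx y hy => ?_, funext hu ▸ not_concaveOn_sin_mul_sin⟩
  have hangle : |x - π / 2| + |y - π / 2| ∈ Icc 0 π := by
    constructor
    · positivity
    · have hx' : |x - π / 2| ≤ π / 2 := abs_le.2 ⟨by linarith [hx.1], by linarith [hx.2]⟩
      have hy' : |y - π / 2| ≤ π / 2 := abs_le.2 ⟨by linarith [hy.1], by linarith [hy.2]⟩
      linarith
  rw [quadratic_form_nonpos_iff, neg_neg, ← sub_nonneg,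
    ← cos_abs_sub_pi_div_two_add_abs_sub_pi_div_two (Ioo_subset_Icc_self hx)
      (Ioo_subset_Icc_self hy), cos_nonneg_iff_le_pi_div_two hangle]
end
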